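/- Let G be a finite group with S ∈ Syl_p(G), and let P ≤ S satisfy C_G(P) ≤ P and N_S(P) ∈ Syl_p(N_G(P)). Then for each fusion-preserving automorphism φ of S with φ(P) = P, the restriction φ|_{N_S(P)} extends to an automorphism of N_G(P). -/

import Mathlib

/-- One direction of fusion preservation for an automorphism `φ` of `S ≤ G`:
`φ ∘ Hom_G(A, B) ∘ φ⁻¹ ⊆ Hom_G(φA, φB)` for all `A, B ≤ S`, expressed elementwise. -/
def FusionPreservingAux {G : Type*} [Group G] (S : Subgroup G) (φ : S ≃* S) : Prop :=
  ∀ (g : G) (A : Subgroup G) (hA : A ≤ S) (hgA : ∀ a ∈ A, g * a * g⁻¹ ∈ S),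
    ∃ h : G, ∀ (a : G) (ha : a ∈ A),
      ((φ ⟨g * a * g⁻¹, hgA a ha⟩ : S) : G) = h * ((φ ⟨a, hA ha⟩ : S) : G) * h⁻¹

/-- `φ ∈ Aut(S)` is fusion preserving with respect to `F_S(G)`:
`φ ∘ Hom_G(A, B) ∘ φ⁻¹ = Hom_G(φA, φB)` for all `A, B ≤ S`. -/
def IsFusionPreserving {G : Type*} [Group G] (S : Subgroup G) (φ : S ≃* S) : Prop :=
  FusionPreservingAux S φ ∧ FusionPreservingAux S φ.symm

/-!
Let `N = N_G(P)` and `T = N_S(P)`. The pairs `(n, m)` with `n ∈ N` and `φ ∘ c_n = c_m ∘ φ`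
on `P` form a group `E`, and `(n, m) ↦ n` makes it an extension of `N` by `C_G(P)`, which is
abelian because `C_G(P) ≤ P`, and whose order is prime to `[N : T]`. The graph of `φ` on `T`
splits this extension over `T`. Fusion preservation says that each `n ∈ N` has a lift to `E`
whose conjugation agrees with `φ` wherever `c_n` maps `T` into `T`; spreading such lifts of
double coset representatives by the graph of `φ` gives a section of `E → N` that is
`T`-equivariant on both sides. Gaschütz's averaging over `N / T`, followed by a `[N : T]`-th root
in `C_G(P)`, corrects this section to a homomorphism that still extends the graph of `φ`. Its
second coordinate is the required automorphism of `N`: an element of its kernel centralizes `P`,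
hence lies in `P ≤ S`, where the map is the injective `φ`.
-/

section CompatibleLift

variable {E Q : Type*} [Group E] [Group Q] (π : E →* Q) (T : Subgroup Q) (ι : T →* E)

/-- `e` lifts `q`, and conjugation by `e` agrees with `ι` on `T ∩ q T q⁻¹`. -/
def IsCompatibleLift (q : Q) (e : E) : Prop :=
  π e = q ∧ ∀ t t' : T, (t : Q) * q = q * t' → ι t * e = e * ι t'

variable {π T ι}

lemma IsCompatibleLift.mul_mul_eq {q : Q} {e : E} (he : IsCompatibleLift π T ι q e)
    {a b a' b' : T} (h : (a : Q) * q * b = a' * q * b') :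
    ι a * e * ι b = ι a' * e * ι b' := by
  have key := he.2 (a'⁻¹ * a) (b' * b⁻¹) (by
    simp only [Subgroup.coe_mul, Subgroup.coe_inv]
    calc (a' : Q)⁻¹ * a * q = (a' : Q)⁻¹ * (a * q * b) * (b : Q)⁻¹ := by group
      _ = q * (b' * (b : Q)⁻¹) := by rw [h]; group)
  rw [map_mul, map_mul, map_inv, map_inv] at key
  calc ι a * e * ι b = ι a' * ((ι a')⁻¹ * ι a * e) * ι b := by group
    _ = ι a' * e * ι b' := by rw [key]; group

lemma isCompatibleLift_self (hι : ∀ t, π (ι t) = t) (t : T) :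
    IsCompatibleLift π T ι t (ι t) :=
  ⟨hι t, fun a b h => by rw [← map_mul, ← map_mul]; exact congrArg ι (Subtype.ext h)⟩

theorem exists_biequivariant_section (hι : ∀ t, π (ι t) = t)
    (hlift : ∀ q, ∃ e, IsCompatibleLift π T ι q e) :
    ∃ s : Q → E, (∀ q, π (s q) = q) ∧ (∀ t : T, s t = ι t) ∧
      ∀ (a b : T) (q : Q), s (a * q * b) = ι a * s q * ι b := by
  classical
  -- On `T` the lift is taken to be `ι` itself, so that the section extends `ι`.
  have hlift' :
      ∀ q, ∃ e, IsCompatibleLift π T ι q e ∧ ∀ h : q ∈ T, e = ι ⟨q, h⟩ := by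
    intro q
    by_cases hq : q ∈ T
    · exact ⟨_, isCompatibleLift_self hι ⟨q, hq⟩, fun _ => rfl⟩
    · obtain ⟨e, he⟩ := hlift q
      exact ⟨e, he, fun h => absurd h hq⟩
  choose L hL hLT using hlift'
  set rep : Q → Q := fun q => (DoubleCoset.mk T T q).out
  have hrep : ∀ q, ∃ a b : T, (a : Q) * rep q * b = q := by
    intro q
    obtain ⟨a, ha, b, hb, h⟩ :=
      (DoubleCoset.eq T T _ _).mp (DoubleCoset.out_eq' T T (DoubleCoset.mk T T q))
    exact ⟨⟨a, ha⟩, ⟨b, hb⟩, h.symm⟩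
  choose α β hαβ using hrep
  refine ⟨fun q => ι (α q) * L (rep q) * ι (β q), fun q => ?_, fun t => ?_, fun a b q => ?_⟩
  · simp only [map_mul, hι, (hL _).1, hαβ]
  · have hrepT : rep t ∈ T := by
      have h : rep t = (α t : Q)⁻¹ * t * (β t : Q)⁻¹ := by
        calc rep t = (α t : Q)⁻¹ * (α t * rep t * β t) * (β t : Q)⁻¹ := by group
          _ = _ := by rw [hαβ]
      rw [h]
      exact mul_mem (mul_mem (inv_mem (α t).2) t.2) (inv_mem (β t).2)
    change ι (α t) * L (rep t) * ι (β t) = ι t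
    rw [hLT _ hrepT, ← map_mul, ← map_mul]
    exact congrArg ι (Subtype.ext (hαβ t))
  · have hr : rep (a * q * b) = rep q :=
      congrArg Quotient.out ((DoubleCoset.eq T T _ _).mpr
        ⟨a⁻¹, inv_mem a.2, b⁻¹, inv_mem b.2, by group⟩)
    have h : ((a * α q : T) : Q) * rep q * (β q * b : T) =
        α (a * q * b) * rep q * β (a * q * b) := by
      rw [← hr, hαβ (a * q * b), hr]
      conv_rhs => rw [← hαβ q]
      simp only [Subgroup.coe_mul]
      group
    simp only [hr]
    rw [((hL _).mul_mul_eq h).symm, map_mul, map_mul]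
    group

end CompatibleLift

open scoped IsMulCommutative

section Cocycle

variable {E Q : Type*} [Group E] [Group Q] {π : E →* Q} {T : Subgroup Q} {ι : T →* E}
  {s : Q → E} (hs : ∀ q, π (s q) = q)

def sectionCocycle (a b : Q) : π.ker :=
  ⟨s a * s b * (s (a * b))⁻¹, by simp [hs]⟩

lemma coe_sectionCocycle (a b : Q) : (sectionCocycle hs a b : E) = s a * s b * (s (a * b))⁻¹ :=
  rfl

lemma sectionCocycle_mul_sectionCocycle (a b c : Q) :
    sectionCocycle hs a b * sectionCocycle hs (a * b) c =
      MulAut.conjNormal (s a) (sectionCocycle hs b c) * sectionCocycle hs a (b * c) := by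
  ext
  simp only [Subgroup.coe_mul, MulAut.conjNormal_apply, coe_sectionCocycle, mul_assoc]
  group

lemma sectionCocycle_mul_right (hR : ∀ q (t : T), s (q * t) = s q * ι t) (a b : Q) (t : T) :
    sectionCocycle hs a (b * t) = sectionCocycle hs a b := by
  ext
  simp only [coe_sectionCocycle, ← mul_assoc, hR]
  group

lemma sectionCocycle_left_eq_one (hL : ∀ (t : T) q, s (t * q) = ι t * s q)
    (hT : ∀ t : T, s t = ι t) (t : T) (b : Q) : sectionCocycle hs t b = 1 := by
  ext
  simp only [coe_sectionCocycle, hL, hT, OneMemClass.coe_one]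
  group

variable [IsMulCommutative π.ker] [Fintype (Q ⧸ T)]

variable (T) in
noncomputable def averagedCocycle (a : Q) : π.ker :=
  ∏ ω : Q ⧸ T, sectionCocycle hs a ω.out

lemma sectionCocycle_pow_index (hR : ∀ q (t : T), s (q * t) = s q * ι t) (a b : Q) :
    sectionCocycle hs a b ^ T.index =
      MulAut.conjNormal (s a) (averagedCocycle T hs b) * averagedCocycle T hs a *
        (averagedCocycle T hs (a * b))⁻¹ := by
  have hshift : ∀ ω : Q ⧸ T,
      sectionCocycle hs a (b * ω.out) = sectionCocycle hs a (b • ω).out := by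
    intro ω
    obtain ⟨t, ht⟩ := QuotientGroup.mk_out_eq_mul T (b * ω.out)
    have hbω : b • ω = ((b * ω.out : Q) : Q ⧸ T) := by
      conv_lhs => rw [← QuotientGroup.out_eq' ω]
      rfl
    rw [hbω, ht, sectionCocycle_mul_right hs hR]
  have hperm : ∏ ω : Q ⧸ T, sectionCocycle hs a (b • ω).out =
      ∏ ω : Q ⧸ T, sectionCocycle hs a ω.out :=
    Equiv.prod_comp (MulAction.toPerm b) fun ω : Q ⧸ T => sectionCocycle hs a ω.out
  have hprod := Finset.prod_congr rfl fun (ω : Q ⧸ T) (_ : ω ∈ Finset.univ) =>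
    sectionCocycle_mul_sectionCocycle hs a b ω.out
  rw [Finset.prod_mul_distrib, Finset.prod_mul_distrib, Finset.prod_const, ← map_prod,
    Finset.prod_congr rfl fun ω _ => hshift ω, hperm] at hprod
  rw [Subgroup.index_eq_card, Nat.card_eq_fintype_card, eq_mul_inv_iff_mul_eq]
  exact hprod

lemma averagedCocycle_coe_eq_one (hL : ∀ (t : T) q, s (t * q) = ι t * s q)
    (hT : ∀ t : T, s t = ι t) (t : T) : averagedCocycle T hs t = 1 :=
  Finset.prod_eq_one fun ω _ => sectionCocycle_left_eq_one hs hL hT t ω.out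

end Cocycle

section Splitting

variable {E Q : Type*} [Group E] [Group Q] {π : E →* Q} {T : Subgroup Q} {ι : T →* E}

theorem exists_splitting_extending [Finite E] [IsMulCommutative π.ker]
    (hι : ∀ t, π (ι t) = t) (hcop : (Nat.card π.ker).Coprime T.index)
    (hlift : ∀ q, ∃ e, IsCompatibleLift π T ι q e) :
    ∃ σ : Q →* E, (∀ q, π (σ q) = q) ∧ ∀ t : T, σ t = ι t := by
  have : Finite Q := Finite.of_surjective π fun q => (hlift q).imp fun _ he => he.1
  let : Fintype (Q ⧸ T) := Fintype.ofFinite _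
  obtain ⟨s, hs, hT, hLR⟩ := exists_biequivariant_section hι hlift
  have hL : ∀ (t : T) q, s (t * q) = ι t * s q := fun t q => by simpa using hLR t 1 q
  have hR : ∀ q (t : T), s (q * t) = s q * ι t := fun q t => by simpa using hLR 1 t q
  set root := (powCoprime hcop).symm
  have hroot : ∀ z, root z ^ T.index = z := (powCoprime hcop).apply_symm_apply
  set A := averagedCocycle T hs
  have hcocycle : ∀ a b, sectionCocycle hs a b =
      MulAut.conjNormal (s a) (root (A b)) * root (A a) * (root (A (a * b)))⁻¹ := by
    intro a b
    apply (powCoprime hcop).injective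
    rw [powCoprime_apply, powCoprime_apply, mul_pow, mul_pow, inv_pow, ← map_pow, hroot, hroot,
      hroot]
    exact sectionCocycle_pow_index hs hR a b
  refine ⟨MonoidHom.mk' (fun a => ((root (A a))⁻¹ : π.ker) * s a) fun a b => ?_,
    fun q => by simp [hs, MonoidHom.mem_ker.mp (root (A q)).2], fun t => ?_⟩
  · have hker : (root (A a))⁻¹ * (MulAut.conjNormal (s a) (root (A b)))⁻¹ *
        sectionCocycle hs a b = (root (A (a * b)))⁻¹ := by
      rw [hcocycle]
      group
    calc (((root (A (a * b)))⁻¹ : π.ker) : E) * s (a * b)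
        = (((root (A a))⁻¹ * (MulAut.conjNormal (s a) (root (A b)))⁻¹ *
            sectionCocycle hs a b : π.ker) : E) * s (a * b) := by rw [hker]
      _ = ((root (A a))⁻¹ : π.ker) * s a * (((root (A b))⁻¹ : π.ker) * s b) := by
        simp only [Subgroup.coe_mul, Subgroup.coe_inv, MulAut.conjNormal_apply,
          coe_sectionCocycle]
        group
  · simp [A, root, averagedCocycle_coe_eq_one hs hL hT, hT]

end Splitting

section Intertwining

variable {G : Type*} [Group G]

def intertwiningPairs (P : Subgroup G) (F : G → G) : Subgroup (G × G) where
  carrier := {x | x.1 ∈ Subgroup.normalizer (P : Set G) ∧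
    ∀ a ∈ P, F (x.1 * a * x.1⁻¹) = x.2 * F a * x.2⁻¹}
  one_mem' := ⟨one_mem _, fun a _ => by simp⟩
  mul_mem' := by
    rintro x y ⟨hx, hxF⟩ ⟨hy, hyF⟩
    refine ⟨mul_mem hx hy, fun a ha => ?_⟩
    have hya : y.1 * a * y.1⁻¹ ∈ P := (Subgroup.mem_normalizer_iff.mp hy a).mp ha
    calc F ((x * y).1 * a * (x * y).1⁻¹) = F (x.1 * (y.1 * a * y.1⁻¹) * x.1⁻¹) := by
          simp only [Prod.fst_mul, mul_inv_rev, mul_assoc]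
      _ = x.2 * (y.2 * F a * y.2⁻¹) * x.2⁻¹ := by rw [hxF _ hya, hyF a ha]
      _ = (x * y).2 * F a * (x * y).2⁻¹ := by simp only [Prod.snd_mul]; group
  inv_mem' := by
    rintro x ⟨hx, hxF⟩
    refine ⟨inv_mem hx, fun a ha => ?_⟩
    have h := hxF _ ((Subgroup.mem_normalizer_iff''.mp hx a).mp ha)
    rw [show x.1 * (x.1⁻¹ * a * x.1) * x.1⁻¹ = a by group] at h
    simp only [Prod.fst_inv, Prod.snd_inv, inv_inv, h]
    group

variable {P : Subgroup G} {F : G → G}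

lemma snd_mem_normalizer_of_mem_intertwiningPairs (hFP : F '' P = P) {x : G × G}
    (hx : x ∈ intertwiningPairs P F) : x.2 ∈ Subgroup.normalizer (P : Set G) := by
  have hconj : ∀ y ∈ intertwiningPairs P F, ∀ b ∈ P, y.2 * b * y.2⁻¹ ∈ P := by
    rintro y ⟨hy, hyF⟩ b hb
    obtain ⟨a, ha, rfl⟩ := hFP.ge hb
    have hya : F (y.1 * a * y.1⁻¹) ∈ F '' P :=
      ⟨_, (Subgroup.mem_normalizer_iff.mp hy a).mp ha, rfl⟩
    rw [hFP, hyF a ha] at hya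
    exact hya
  refine Subgroup.mem_normalizer_iff.mpr fun b => ⟨hconj x hx b, fun hb => ?_⟩
  simpa [mul_assoc] using hconj x⁻¹ (inv_mem hx) _ hb

lemma mem_centralizer_of_one_mem_intertwiningPairs (hFP : F '' P = P) {m : G}
    (hm : (1, m) ∈ intertwiningPairs P F) : m ∈ Subgroup.centralizer (P : Set G) := by
  refine Subgroup.mem_centralizer_iff.mpr fun b hb => ?_
  obtain ⟨a, ha, rfl⟩ := hFP.ge hb
  have h := hm.2 a ha
  simp only [one_mul, inv_one, mul_one] at h
  calc F a * m = m * F a * m⁻¹ * m := by rw [← h]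
    _ = m * F a := by group

lemma mem_centralizer_of_mem_intertwiningPairs_one (hFinj : Set.InjOn F P) {n : G}
    (hn : (n, 1) ∈ intertwiningPairs P F) : n ∈ Subgroup.centralizer (P : Set G) := by
  refine Subgroup.mem_centralizer_iff.mpr fun a ha => ?_
  have hna : n * a * n⁻¹ ∈ P := (Subgroup.mem_normalizer_iff.mp hn.1 a).mp ha
  have h : n * a * n⁻¹ = a := hFinj hna ha (by simpa using hn.2 a ha)
  calc a * n = n * a * n⁻¹ * n := by rw [h]
    _ = n * a := by group

variable (P F) in
def intertwiningFst : intertwiningPairs P F →* Subgroup.normalizer (P : Set G) :=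
  ((MonoidHom.fst G G).comp (intertwiningPairs P F).subtype).codRestrict _ fun x => x.2.1

lemma fst_eq_one_of_mem_ker {x : intertwiningPairs P F} (hx : x ∈ (intertwiningFst P F).ker) :
    (x : G × G).1 = 1 :=
  congrArg Subtype.val (MonoidHom.mem_ker.mp hx)

lemma snd_mem_centralizer_of_mem_ker (hFP : F '' P = P) {x : intertwiningPairs P F}
    (hx : x ∈ (intertwiningFst P F).ker) : (x : G × G).2 ∈ Subgroup.centralizer (P : Set G) :=
  mem_centralizer_of_one_mem_intertwiningPairs hFP
    (by rw [← fst_eq_one_of_mem_ker hx]; exact x.2)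

lemma isMulCommutative_ker_intertwiningFst (hFP : F '' P = P)
    (hcent : Subgroup.centralizer (P : Set G) ≤ P) :
    IsMulCommutative (intertwiningFst P F).ker := by
  refine IsMulCommutative.of_setLike_mul_comm fun x hx y hy => Subtype.ext (Prod.ext ?_ ?_)
  · simp [fst_eq_one_of_mem_ker hx, fst_eq_one_of_mem_ker hy]
  · simp only [Subgroup.coe_mul, Prod.snd_mul]
    exact (Subgroup.mem_centralizer_iff.mp (snd_mem_centralizer_of_mem_ker hFP hx) _
      (hcent (snd_mem_centralizer_of_mem_ker hFP hy))).symm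

lemma card_ker_intertwiningFst_dvd (hFP : F '' P = P)
    (hcent : Subgroup.centralizer (P : Set G) ≤ P) :
    Nat.card (intertwiningFst P F).ker ∣ Nat.card P := by
  refine Subgroup.card_dvd_of_injective
    (((MonoidHom.snd G G).comp ((intertwiningPairs P F).subtype.comp
      (intertwiningFst P F).ker.subtype)).codRestrict P
        fun x => hcent (snd_mem_centralizer_of_mem_ker hFP x.2)) fun x y hxy => ?_
  refine Subtype.ext (Subtype.ext (Prod.ext ?_ (congrArg Subtype.val hxy)))
  rw [fst_eq_one_of_mem_ker x.2, fst_eq_one_of_mem_ker y.2]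

end Intertwining

section Normalizer

variable {G : Type*} [Group G] {S P : Subgroup G} {F : G → G}

lemma apply_conj_of_mul_of_mem (hFmul : ∀ x ∈ S, ∀ y ∈ S, F (x * y) = F x * F y) {x y : G}
    (hx : x ∈ S) (hy : y ∈ S) : F (x * y * x⁻¹) = F x * F y * (F x)⁻¹ := by
  have hone : F 1 = 1 := by simpa using hFmul 1 (one_mem _) 1 (one_mem _)
  have hinv : F x⁻¹ = (F x)⁻¹ :=
    eq_inv_of_mul_eq_one_right (by rw [← hFmul x hx _ (inv_mem hx), mul_inv_cancel, hone])
  rw [hFmul _ (mul_mem hx hy) _ (inv_mem hx), hFmul x hx y hy, hinv]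

def intertwiningGraph (hPS : P ≤ S) (hFmul : ∀ x ∈ S, ∀ y ∈ S, F (x * y) = F x * F y) :
    (S ⊓ Subgroup.normalizer (P : Set G)).subgroupOf (Subgroup.normalizer (P : Set G)) →*
      intertwiningPairs P F :=
  MonoidHom.mk' (fun t => ⟨(t.1.1, F t.1.1), t.1.2,
      fun _ ha => apply_conj_of_mul_of_mem hFmul (Subgroup.mem_subgroupOf.mp t.2).1 (hPS ha)⟩)
    fun a b => Subtype.ext (Prod.ext rfl
      (hFmul _ (Subgroup.mem_subgroupOf.mp a.2).1 _ (Subgroup.mem_subgroupOf.mp b.2).1))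

lemma exists_isCompatibleLift (hPS : P ≤ S)
    (hFmul : ∀ x ∈ S, ∀ y ∈ S, F (x * y) = F x * F y)
    (hfus : ∀ g : G, ∃ h : G, ∀ a ∈ S, g * a * g⁻¹ ∈ S →
      F (g * a * g⁻¹) = h * F a * h⁻¹)
    (q : Subgroup.normalizer (P : Set G)) :
    ∃ e, IsCompatibleLift (intertwiningFst P F) _ (intertwiningGraph hPS hFmul) q e := by
  obtain ⟨h, hh⟩ := hfus q
  refine ⟨⟨((q : G), h), q.2, fun a ha => hh a (hPS ha)
    (hPS ((Subgroup.mem_normalizer_iff.mp q.2 a).mp ha))⟩, rfl, fun t t' htt' => ?_⟩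
  have hv : t.1.1 * q = q * t'.1.1 := congrArg Subtype.val htt'
  have ht : t.1.1 = q * t'.1.1 * (q : G)⁻¹ := by
    rw [← hv]; group
  refine Subtype.ext (Prod.ext hv ?_)
  change F t.1.1 * h = h * F t'.1.1
  rw [ht, hh _ (Subgroup.mem_subgroupOf.mp t'.2).1 (ht ▸ (Subgroup.mem_subgroupOf.mp t.2).1)]
  group

theorem exists_mulEquiv_normalizer_extending [Finite G] (hPS : P ≤ S)
    (hcent : Subgroup.centralizer (P : Set G) ≤ P)
    (hcop : (Nat.card P).Coprime
      ((S ⊓ Subgroup.normalizer (P : Set G)).subgroupOf (Subgroup.normalizer (P : Set G))).index)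
    (hFmul : ∀ x ∈ S, ∀ y ∈ S, F (x * y) = F x * F y) (hFinj : Set.InjOn F S)
    (hFP : F '' P = P)
    (hfus : ∀ g : G, ∃ h : G, ∀ a ∈ S, g * a * g⁻¹ ∈ S →
      F (g * a * g⁻¹) = h * F a * h⁻¹) :
    ∃ ψ : Subgroup.normalizer (P : Set G) ≃* Subgroup.normalizer (P : Set G),
      ∀ x : Subgroup.normalizer (P : Set G), (x : G) ∈ S → (ψ x : G) = F x := by
  have := isMulCommutative_ker_intertwiningFst hFP hcent
  obtain ⟨σ, hσ, hσι⟩ := exists_splitting_extending (fun _ => rfl)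
    (hcop.coprime_dvd_left (card_ker_intertwiningFst_dvd hFP hcent))
    (exists_isCompatibleLift hPS hFmul hfus)
  let ψ : Subgroup.normalizer (P : Set G) →* Subgroup.normalizer (P : Set G) :=
    ((MonoidHom.snd G G).comp ((intertwiningPairs P F).subtype.comp σ)).codRestrict _
      fun x => snd_mem_normalizer_of_mem_intertwiningPairs hFP (σ x).2
  have hψS : ∀ x : Subgroup.normalizer (P : Set G), (x : G) ∈ S → (ψ x : G) = F x :=
    fun x hx => congrArg (fun e : intertwiningPairs P F => (e : G × G).2)
      (hσι ⟨x, Subgroup.mem_subgroupOf.mpr ⟨hx, x.2⟩⟩)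
  have hinj : Function.Injective ψ := by
    refine (injective_iff_map_eq_one ψ).mpr fun x hx => ?_
    have hσx : (σ x : G × G) = ((x : G), 1) :=
      Prod.ext (congrArg Subtype.val (hσ x)) (congrArg Subtype.val hx)
    have hxP : (x : G) ∈ P := hcent (mem_centralizer_of_mem_intertwiningPairs_one
      (hFinj.mono hPS) (hσx ▸ (σ x).2))
    have hFx : F x = F 1 := calc
      F x = ψ x := (hψS x (hPS hxP)).symm
      _ = ψ 1 := by rw [hx, map_one]
      _ = F 1 := hψS 1 (one_mem S)
    exact Subtype.ext (hFinj (hPS hxP) (one_mem S) hFx)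
  exact ⟨MulEquiv.ofBijective ψ (Finite.injective_iff_bijective.mp hinj), hψS⟩

end Normalizer

section Extension

variable {G : Type*} [Group G] {S P : Subgroup G} {φ : S ≃* S} {F : G → G}

lemma map_mul_of_extends (hF : ∀ s : S, F s = φ s) :
    ∀ x ∈ S, ∀ y ∈ S, F (x * y) = F x * F y :=
  fun x hx y hy =>
    (hF (⟨x, hx⟩ * ⟨y, hy⟩)).trans (by rw [map_mul, Subgroup.coe_mul, ← hF, ← hF])

lemma injOn_of_extends (hF : ∀ s : S, F s = φ s) : Set.InjOn F S := fun x hx y hy hxy => by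
  rw [hF ⟨x, hx⟩, hF ⟨y, hy⟩] at hxy
  exact congrArg Subtype.val (φ.injective (Subtype.ext hxy))

lemma image_eq_of_extends (hF : ∀ s : S, F s = φ s) (hPS : P ≤ S)
    (hφP : (P.subgroupOf S).map φ.toMonoidHom = P.subgroupOf S) : F '' P = P := by
  ext b
  constructor
  · rintro ⟨a, ha, rfl⟩
    have h : φ ⟨a, hPS ha⟩ ∈ P.subgroupOf S := by
      rw [← hφP]
      exact ⟨_, Subgroup.mem_subgroupOf.mpr ha, rfl⟩
    rw [hF ⟨a, hPS ha⟩]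
    exact Subgroup.mem_subgroupOf.mp h
  · intro hb
    obtain ⟨a, ha, hab⟩ : (⟨b, hPS hb⟩ : S) ∈ (P.subgroupOf S).map φ.toMonoidHom := by
      rw [hφP]
      exact Subgroup.mem_subgroupOf.mpr hb
    exact ⟨a, Subgroup.mem_subgroupOf.mp ha, (hF a).trans (congrArg Subtype.val hab)⟩

lemma FusionPreservingAux.exists_conj_eq (hF : ∀ s : S, F s = φ s) (hφ : FusionPreservingAux S φ)
    (g : G) : ∃ h : G, ∀ a ∈ S, g * a * g⁻¹ ∈ S → F (g * a * g⁻¹) = h * F a * h⁻¹ := by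
  obtain ⟨h, hh⟩ := hφ g (S ⊓ S.comap (MulAut.conj g).toMonoidHom) inf_le_left fun _ ha => ha.2
  refine ⟨h, fun a ha hga => ?_⟩
  rw [hF ⟨_, hga⟩, hh a ⟨ha, hga⟩, ← hF ⟨a, ha⟩]

end Extension

/-- Let `G` be finite with `S ∈ Syl_p(G)`, and let `P ≤ S` satisfy `C_G(P) ≤ P` and
`N_S(P) ∈ Syl_p(N_G(P))`.  Then for each fusion preserving `φ ∈ Aut(S)` with `φ(P) = P`,
the restriction `φ|_{N_S(P)}` extends to an automorphism of `N_G(P)`. -/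
theorem stmt_13 (p : ℕ) [Fact p.Prime] (G : Type*) [Group G] [Finite G]
    (S : Sylow p G) (P : Subgroup G) (hPS : P ≤ (S : Subgroup G))
    (hcent : Subgroup.centralizer (P : Set G) ≤ P)
    (hsyl : ∃ Q : Sylow p ↥(Subgroup.normalizer (P : Set G)),
      (Q : Subgroup ↥(Subgroup.normalizer (P : Set G))) = ((S : Subgroup G) ⊓ (Subgroup.normalizer (P : Set G))).subgroupOf (Subgroup.normalizer (P : Set G)))
    (φ : ↥(S : Subgroup G) ≃* ↥(S : Subgroup G))
    (hφ : IsFusionPreserving (S : Subgroup G) φ)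
    (hφP : Subgroup.map φ.toMonoidHom (P.subgroupOf (S : Subgroup G))
      = P.subgroupOf (S : Subgroup G)) :
    ∃ ψ : ↥(Subgroup.normalizer (P : Set G)) ≃* ↥(Subgroup.normalizer (P : Set G)),
      ∀ (x : G) (hxS : x ∈ (S : Subgroup G)) (hxN : x ∈ (Subgroup.normalizer (P : Set G))),
        ((ψ ⟨x, hxN⟩ : ↥(Subgroup.normalizer (P : Set G))) : G) = ((φ ⟨x, hxS⟩ : ↥(S : Subgroup G)) : G) := by
  obtain ⟨F, hF⟩ : ∃ F : G → G, ∀ s : S, F s = φ s :=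
    ⟨Function.extend Subtype.val (fun s => (φ s : G)) 1,
      Subtype.val_injective.extend_apply _ _⟩
  obtain ⟨Q, hQ⟩ := hsyl
  obtain ⟨k, hk⟩ := (S.isPGroup'.to_le hPS).exists_card_eq
  have hcop : (Nat.card P).Coprime
      (((S : Subgroup G) ⊓ Subgroup.normalizer (P : Set G)).subgroupOf
        (Subgroup.normalizer (P : Set G))).index := by
    rw [hk, ← hQ]
    exact ((Nat.Prime.coprime_iff_not_dvd Fact.out).mpr Q.not_dvd_index).pow_left k
  obtain ⟨ψ, hψ⟩ := exists_mulEquiv_normalizer_extending hPS hcent hcop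
    (map_mul_of_extends hF) (injOn_of_extends hF) (image_eq_of_extends hF hPS hφP)
    (hφ.1.exists_conj_eq hF)
  exact ⟨ψ, fun x hxS hxN => (hψ ⟨x, hxN⟩ hxS).trans (hF ⟨x, hxS⟩)⟩
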